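/- In the Setting below, assume q ≥ 1 and that Ω₁ = U₁ᵀΩ has rank k. Then for the matrix square root, tr(A^{1/2}) − tr((Â_q)^{1/2}) ≤ Σ_{i=k+1}^{n} √λ_i + γ^{2q−3/2} ‖Λ₂^{1/4} Ω₂ Ω₁†‖_F², where (Â_q)^{1/2} denotes the PSD square root of the Nyström approximation Â_q and Λ₂^{1/4} = diag(λ_{k+1}^{1/4},…,λₙ^{1/4}). (Since A^{1/2} ⪰ (Â_q)^{1/2} ⪰ 0, the left-hand side equals the nuclear norm ‖A^{1/2} − (Â_q)^{1/2}‖_*.) -/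

import Mathlib

open Matrix MeasureTheory ProbabilityTheory
open scoped ENNReal

namespace FunNystrom

/-- Frobenius norm of a real matrix. -/
noncomputable def frob {m k : Type*} [Fintype m] [Fintype k] (M : Matrix m k ℝ) : ℝ :=
  Real.sqrt (∑ i, ∑ j, (M i j) ^ 2)

/-- Spectral norm (the ℓ²→ℓ² operator norm) of a real matrix. -/
noncomputable def specNorm {m k : Type*} [Fintype m] [Fintype k] [DecidableEq k]
    (M : Matrix m k ℝ) : ℝ :=
  ‖LinearMap.toContinuousLinearMap (Matrix.toEuclideanLin M)‖

/-- Schatten-`s` norm of a real matrix: the `ℓˢ` norm of its singular values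
(the square roots of the eigenvalues of `Mᴴ * M`). -/
noncomputable def schatten {m k : Type*} [Fintype m] [Fintype k] [DecidableEq k]
    (s : ℝ) (M : Matrix m k ℝ) : ℝ :=
  (∑ i, Real.sqrt ((Matrix.isHermitian_conjTranspose_mul_self M).eigenvalues i) ^ s) ^ s⁻¹

/-- `fB = f(B)`: the matrix function `f` applied to the symmetric matrix `B`, i.e.
`fB = V f(D) Vᵀ` for a spectral decomposition `B = V D Vᵀ` (the continuous
functional calculus, applied entrywise to the diagonal of `D`). -/
def IsMatFun {n : Type*} [Fintype n] [DecidableEq n]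
    (f : ℝ → ℝ) (B fB : Matrix n n ℝ) : Prop :=
  ∃ (V : Matrix n n ℝ) (d : n → ℝ),
    V * Vᵀ = 1 ∧ Vᵀ * V = 1 ∧
    B = V * Matrix.diagonal d * Vᵀ ∧
    fB = V * Matrix.diagonal (fun i => f (d i)) * Vᵀ

/-- `f` is operator monotone on `[0,∞)`: for all `m ≥ 1` and all `m × m` PSD
matrices `B ⪰ C` one has `f(B) ⪰ f(C)`. -/
def OpMonotoneOn (f : ℝ → ℝ) : Prop :=
  ∀ (m : ℕ) (B C fB fC : Matrix (Fin m) (Fin m) ℝ),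
    B.PosSemidef → C.PosSemidef → (B - C).PosSemidef →
    IsMatFun f B fB → IsMatFun f C fC → (fB - fC).PosSemidef

/-- `P` is the orthogonal projection onto the column space of `M`:
the unique symmetric idempotent matrix whose column space equals `range M`. -/
def IsProjOnto {n m : Type*} [Fintype n] [Fintype m] [DecidableEq n]
    (P : Matrix n n ℝ) (M : Matrix n m ℝ) : Prop :=
  Pᵀ = P ∧ P * P = P ∧
  LinearMap.range P.mulVecLin = LinearMap.range M.mulVecLin

/-- `A^r = U Λ^r Uᵀ` for the spectral decomposition `A = U Λ Uᵀ`
(diagonal entries raised to the `r`-th power). -/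
noncomputable def apow {n : ℕ} (U : Matrix (Fin n) (Fin n) ℝ) (lam : Fin n → ℝ)
    (r : ℝ) : Matrix (Fin n) (Fin n) ℝ :=
  U * Matrix.diagonal (fun i => lam i ^ r) * Uᵀ

/-- The index `k + i` in `Fin n`, for `i : Fin (n - k)`. -/
def tailIdx {n k : ℕ} (hkn : k < n) (i : Fin (n - k)) : Fin n :=
  ⟨k + i.1, by have := i.2; omega⟩

instance matMeasurableSpace {m k : Type*} : MeasurableSpace (Matrix m k ℝ) :=
  inferInstanceAs (MeasurableSpace (m → k → ℝ))

/-- The law of an `n × m` random matrix with i.i.d. standard Gaussian `N(0,1)`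
entries: the product over all entries of the standard Gaussian measure on `ℝ`. -/
noncomputable def gaussianMatrix (n m : ℕ) : Measure (Matrix (Fin n) (Fin m) ℝ) :=
  Measure.pi fun _ : Fin n => Measure.pi fun _ : Fin m => gaussianReal 0 1

/- ---------- auxiliary lemmas ---------- -/

lemma sum_sq_eq_trace' {m l : Type*} [Fintype m] [Fintype l] (M : Matrix m l ℝ) :
    ∑ i, ∑ j, (M i j)^2 = (Mᵀ * M).trace := by
  rw [Matrix.trace, Finset.sum_comm]
  simp [Matrix.mul_apply, Matrix.diag, sq]

lemma starV_eq' {m : Type*} [Fintype m] (M : Matrix m m ℝ) : star M = Mᵀ := by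
  rw [Matrix.star_eq_conjTranspose, Matrix.conjTranspose_eq_transpose_of_trivial]

lemma proj_contract' {m : Type*} [Fintype m] (E : Matrix m m ℝ) (hsym : Eᵀ = E)
    (hidem : E * E = E) (v : m → ℝ) : ∑ i, ((E *ᵥ v) i)^2 ≤ ∑ i, (v i)^2 := by
  have h1 : ∑ i, ((E *ᵥ v) i)^2 = ∑ i, v i * ((E *ᵥ v) i) := by
    have h : (E *ᵥ v) ⬝ᵥ (E *ᵥ v) = v ⬝ᵥ (E *ᵥ v) := by
      rw [Matrix.dotProduct_mulVec (E *ᵥ v) E v, Matrix.vecMul_mulVec, hsym, hidem,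
        Matrix.dotProduct_mulVec v E v, ← Matrix.mulVec_transpose, hsym]
    simpa [dotProduct, sq] using h
  have h2 := Finset.sum_mul_sq_le_sq_mul_sq Finset.univ v (fun i => (E *ᵥ v) i)
  have h3 : (0:ℝ) ≤ ∑ i, ((E *ᵥ v) i)^2 := Finset.sum_nonneg fun i _ => sq_nonneg _
  have h4 : (0:ℝ) ≤ ∑ i, (v i)^2 := Finset.sum_nonneg fun i _ => sq_nonneg _
  nlinarith [h2, h1, h3, h4]

lemma traceP_le_trace' {m : Type*} [Fintype m] [DecidableEq m]
    (P T S : Matrix m m ℝ) (hPsym : Pᵀ = P) (hPP : P * P = P) (hTsym : Tᵀ = T)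
    (hS : S.PosSemidef) (hSq : S * S = T * P * T) :
    (P * T).trace ≤ S.trace := by
  have hH : S.IsHermitian := hS.1
  set V : Matrix m m ℝ := (hH.eigenvectorUnitary : Matrix m m ℝ) with hVdef
  set s : m → ℝ := hH.eigenvalues with hsdef
  have hsnn : ∀ j, 0 ≤ s j := hS.eigenvalues_nonneg
  have hV1 : Vᵀ * V = 1 := by
    have := Matrix.mem_unitaryGroup_iff'.mp hH.eigenvectorUnitary.2
    rwa [starV_eq'] at this
  have hV2 : V * Vᵀ = 1 := by
    have := Matrix.mem_unitaryGroup_iff.mp hH.eigenvectorUnitary.2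
    rwa [starV_eq'] at this
  have hspec : S = V * Matrix.diagonal s * Vᵀ := by
    have := hH.spectral_theorem
    rw [Unitary.conjStarAlgAut_apply, starV_eq'] at this
    simpa [RCLike.ofReal_real_eq_id] using this
  have htrS : S.trace = ∑ j, s j := by
    rw [hspec, Matrix.trace_mul_cycle, hV1, one_mul, Matrix.trace_diagonal]
  have hSV : S * V = V * Matrix.diagonal s := by
    rw [hspec, mul_assoc, hV1, mul_one]
  have hPPa : ∀ X : Matrix m m ℝ, P * (P * X) = P * X := fun X => by rw [← mul_assoc, hPP]
  set Y : Matrix m m ℝ := P * T * V with hYdef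
  set Q : Matrix m m ℝ := P * V with hQdef
  have hYtY : Yᵀ * Y = Matrix.diagonal (fun j => s j ^ 2) := by
    have h1 : Yᵀ * Y = Vᵀ * ((S * S) * V) := by
      rw [hSq, hYdef, Matrix.transpose_mul, Matrix.transpose_mul, hPsym, hTsym]
      simp only [Matrix.mul_assoc, hPPa]
    rw [h1, mul_assoc, hSV, ← mul_assoc S V, hSV, ← mul_assoc, ← mul_assoc, hV1, one_mul,
      Matrix.diagonal_mul_diagonal]
    congr 1
    ext j
    ring
  have hQtY : Qᵀ * Y = Vᵀ * (P * T) * V := by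
    rw [hQdef, hYdef, Matrix.transpose_mul, hPsym]
    simp only [Matrix.mul_assoc, hPPa]
  have hQtQ : Qᵀ * Q = Qᵀ * V := by
    rw [hQdef, Matrix.transpose_mul, hPsym]
    simp only [Matrix.mul_assoc, hPPa]
  have htrPT : (P * T).trace = ∑ j, ∑ i, Q i j * Y i j := by
    have h1 : (P * T).trace = (Vᵀ * (P * T) * V).trace := by
      rw [Matrix.trace_mul_cycle, ← mul_assoc, hV2, one_mul]
    rw [h1, ← hQtY, Matrix.trace]
    apply Finset.sum_congr rfl
    intro j _
    simp [Matrix.mul_apply, Matrix.diag]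
  rw [htrPT, htrS]
  apply Finset.sum_le_sum
  intro j _
  have hYcol : ∑ i, (Y i j) ^ 2 = s j ^ 2 := by
    have := congrFun (congrFun hYtY j) j
    simp only [Matrix.mul_apply, Matrix.transpose_apply, Matrix.diagonal_apply_eq] at this
    rw [← this]
    apply Finset.sum_congr rfl
    intro i _
    ring
  have hVcol : ∑ i, (V i j) ^ 2 = 1 := by
    have := congrFun (congrFun hV1 j) j
    simp only [Matrix.mul_apply, Matrix.transpose_apply, Matrix.one_apply_eq] at this
    rw [← this]
    apply Finset.sum_congr rfl
    intro i _
    ring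
  have hQcol : ∑ i, (Q i j) ^ 2 ≤ 1 := by
    have heq : ∑ i, (Q i j) ^ 2 = ∑ i, Q i j * V i j := by
      have h1 := congrFun (congrFun hQtQ j) j
      simp only [Matrix.mul_apply, Matrix.transpose_apply] at h1
      calc ∑ i, (Q i j) ^ 2 = ∑ i, Q i j * Q i j := by
            apply Finset.sum_congr rfl; intro i _; ring
        _ = ∑ i, Q i j * V i j := h1
    have hcs := Finset.sum_mul_sq_le_sq_mul_sq Finset.univ (fun i => Q i j) (fun i => V i j)
    rw [hVcol, ← heq] at hcs
    have hnn : (0:ℝ) ≤ ∑ i, (Q i j) ^ 2 := Finset.sum_nonneg fun i _ => sq_nonneg _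
    nlinarith [hcs, hnn]
  have hcs2 := Finset.sum_mul_sq_le_sq_mul_sq Finset.univ (fun i => Q i j) (fun i => Y i j)
  rw [hYcol] at hcs2
  have hfin : (∑ i, Q i j * Y i j) ^ 2 ≤ s j ^ 2 := by
    calc (∑ i, Q i j * Y i j) ^ 2 ≤ (∑ i, Q i j ^ 2) * s j ^ 2 := hcs2
      _ ≤ 1 * s j ^ 2 := mul_le_mul_of_nonneg_right hQcol (sq_nonneg _)
      _ = s j ^ 2 := one_mul _
  nlinarith [hfin, hsnn j]

lemma key_entry' (qR : ℝ) (hq : 1 ≤ qR) (x y μ ν b : ℝ) (hx : 0 ≤ x) (hν : 0 < ν)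
    (hxμ : x ≤ μ) (hνy : ν ≤ y) :
    (x ^ (qR - 1/2) * b * y ^ (3/4 - qR))^2 ≤ (μ/ν)^(2*qR - 3/2) * (x ^ ((1:ℝ)/4) * b)^2 := by
  have hy : 0 < y := lt_of_lt_of_le hν hνy
  have hμ0 : 0 ≤ μ := le_trans hx hxμ
  set c2 : ℝ := 2*qR - 3/2 with hc2
  have hc2pos : 0 < c2 := by rw [hc2]; linarith
  have hexp : (qR - 1/2) + (qR - 1/2) = 1/2 + c2 := by rw [hc2]; ring
  have hxsq : (x ^ (qR - 1/2))^2 = x ^ (1/2 : ℝ) * x ^ c2 := by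
    rw [sq, ← Real.rpow_add' hx (by intro h; rw [hc2] at *; linarith), hexp,
      Real.rpow_add' hx (by intro h; rw [hc2] at h; linarith)]
  have hysq : (y ^ (3/4 - qR))^2 = y ^ (-c2) := by
    rw [sq, ← Real.rpow_add hy]
    congr 1
    rw [hc2]
    ring
  have hx4 : (x ^ ((1:ℝ)/4))^2 = x ^ (1/2 : ℝ) := by
    rw [sq, ← Real.rpow_add' hx (by norm_num)]
    norm_num
  have hmain : x ^ c2 * y ^ (-c2) ≤ (μ/ν) ^ c2 := by
    rw [Real.div_rpow hμ0 hν.le]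
    have h1 : x ^ c2 ≤ μ ^ c2 := Real.rpow_le_rpow hx hxμ hc2pos.le
    have h2 : y ^ (-c2) ≤ ν ^ (-c2) := Real.rpow_le_rpow_of_nonpos hν hνy (by linarith)
    have h3 : ν ^ (-c2) = (ν ^ c2)⁻¹ := by rw [Real.rpow_neg hν.le]
    calc x ^ c2 * y ^ (-c2) ≤ μ ^ c2 * ν ^ (-c2) :=
          mul_le_mul h1 h2 (Real.rpow_nonneg hy.le _) (Real.rpow_nonneg hμ0 _)
      _ = μ ^ c2 / ν ^ c2 := by rw [h3, div_eq_mul_inv]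
  calc (x ^ (qR - 1/2) * b * y ^ (3/4 - qR))^2
      = (x ^ (1/2:ℝ) * b^2) * (x ^ c2 * y ^ (-c2)) := by
        rw [mul_pow, mul_pow, hxsq, hysq]
        ring
    _ ≤ (x ^ (1/2:ℝ) * b^2) * ((μ/ν) ^ c2) := by
        apply mul_le_mul_of_nonneg_left hmain (by positivity)
    _ = (μ/ν)^c2 * (x ^ ((1:ℝ)/4) * b)^2 := by
        rw [mul_pow, hx4]
        ring

lemma rank_isUnit_det' {k : ℕ} (M : Matrix (Fin k) (Fin k) ℝ) (h : M.rank = k) :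
    IsUnit M.det := by
  have hfin : Module.finrank ℝ (LinearMap.range M.mulVecLin) = k := h
  have hsurj : Function.Surjective M.mulVecLin := by
    rw [← LinearMap.range_eq_top]
    apply Submodule.eq_top_of_finrank_eq
    rw [hfin]
    simp [Module.finrank_fintype_fun_eq_card]
  have hinj : Function.Injective M.mulVec := by
    have := LinearMap.injective_iff_surjective.mpr hsurj
    simpa [Matrix.coe_mulVecLin] using this
  rw [← Matrix.isUnit_iff_isUnit_det]
  exact Matrix.mulVec_injective_iff_isUnit.mp hinj

/-- structural nuclear-norm (trace) bound for the matrix square root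
(`q ≥ 1`); `Shat` is the PSD square root of the Nyström approximation. -/
theorem funNystrom_sqrt_nuclear_structural {n k p : ℕ} (q : ℕ) (hq : 1 ≤ q)
    (hk1 : 1 ≤ k) (hkn : k < n)
    (U : Matrix (Fin n) (Fin n) ℝ) (hU : U * Uᵀ = 1) (hU' : Uᵀ * U = 1)
    (lam : Fin n → ℝ) (hlam : Antitone lam) (hlam0 : ∀ i, 0 ≤ lam i)
    (hlamk : 0 < lam ⟨k - 1, by omega⟩)
    (A : Matrix (Fin n) (Fin n) ℝ) (hA : A = U * Matrix.diagonal lam * Uᵀ)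
    (Ω : Matrix (Fin n) (Fin (k + p)) ℝ)
    (P : Matrix (Fin n) (Fin n) ℝ)
    (hP : IsProjOnto P (apow U lam ((q : ℝ) - 1/2) * Ω))
    (Ahat : Matrix (Fin n) (Fin n) ℝ)
    (hAhat : Ahat = apow U lam (1/2) * P * apow U lam (1/2))
    (Ω₁ : Matrix (Fin k) (Fin (k + p)) ℝ)
    (hΩ₁ : Ω₁ = (Matrix.of fun (i : Fin n) (j : Fin k) => U i ⟨j.1, by have := j.2; omega⟩)ᵀ * Ω)
    (Ω₂ : Matrix (Fin (n - k)) (Fin (k + p)) ℝ)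
    (hΩ₂ : Ω₂ = (Matrix.of fun (i : Fin n) (j : Fin (n - k)) => U i (tailIdx hkn j))ᵀ * Ω)
    (hrank : Ω₁.rank = k)
    (Shat : Matrix (Fin n) (Fin n) ℝ) (hShat : Shat.PosSemidef)
    (hShatsq : Shat * Shat = Ahat) :
    (apow U lam (1/2)).trace - Shat.trace ≤
      (∑ i : Fin (n - k), Real.sqrt (lam (tailIdx hkn i))) +
      (lam ⟨k, hkn⟩ / lam ⟨k - 1, by omega⟩) ^ (2 * (q : ℝ) - 3/2) *
        frob ((Matrix.diagonal (fun i : Fin (n - k) => lam (tailIdx hkn i) ^ ((1 : ℝ)/4))) * Ω₂ * (Ω₁ᵀ * (Ω₁ * Ω₁ᵀ)⁻¹)) ^ 2 := by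
  obtain ⟨hPsym, hPP, hPrange⟩ := hP
  have hUU : ∀ X : Matrix (Fin n) (Fin n) ℝ, Uᵀ * (U * X) = X := fun X => by
    rw [← Matrix.mul_assoc, hU', Matrix.one_mul]
  have hqR : (1:ℝ) ≤ (q:ℝ) := by exact_mod_cast hq
  -- basic objects
  set T : Matrix (Fin n) (Fin n) ℝ := apow U lam (1/2) with hT
  set R : Matrix (Fin n) (Fin n) ℝ := apow U lam (1/4) with hR
  set Z : Matrix (Fin n) (Fin (k+p)) ℝ := apow U lam ((q : ℝ) - 1/2) * Ω with hZ
  set E : Matrix (Fin n) (Fin n) ℝ := 1 - P with hE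
  have hTsym : Tᵀ = T := by
    rw [hT]
    simp only [apow]
    rw [Matrix.transpose_mul, Matrix.transpose_mul, Matrix.transpose_transpose,
      Matrix.diagonal_transpose, Matrix.mul_assoc]
  have hRsym : Rᵀ = R := by
    rw [hR]
    simp only [apow]
    rw [Matrix.transpose_mul, Matrix.transpose_mul, Matrix.transpose_transpose,
      Matrix.diagonal_transpose, Matrix.mul_assoc]
  have hRR : R * R = T := by
    rw [hR, hT]
    simp only [apow]
    have hd : (fun i => lam i ^ ((1:ℝ)/4) * lam i ^ ((1:ℝ)/4)) = fun i => lam i ^ ((1:ℝ)/2) :=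
      funext fun i => by
        rw [← Real.rpow_add' (hlam0 i) (by norm_num)]
        norm_num
    have hDD : Matrix.diagonal (fun i => lam i ^ ((1:ℝ)/4)) *
        Matrix.diagonal (fun i => lam i ^ ((1:ℝ)/4))
        = Matrix.diagonal (fun i => lam i ^ ((1:ℝ)/2)) := by
      rw [Matrix.diagonal_mul_diagonal, hd]
    calc U * Matrix.diagonal (fun i => lam i ^ ((1:ℝ)/4)) * Uᵀ *
          (U * Matrix.diagonal (fun i => lam i ^ ((1:ℝ)/4)) * Uᵀ)
        = U * (Matrix.diagonal (fun i => lam i ^ ((1:ℝ)/4)) *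
            (Matrix.diagonal (fun i => lam i ^ ((1:ℝ)/4)) * Uᵀ)) := by
          simp only [Matrix.mul_assoc, hUU]
      _ = U * Matrix.diagonal (fun i => lam i ^ ((1:ℝ)/2)) * Uᵀ := by
          simp only [← Matrix.mul_assoc]
          rw [Matrix.mul_assoc U, hDD]
  have hEsym : Eᵀ = E := by rw [hE, Matrix.transpose_sub, Matrix.transpose_one, hPsym]
  have hEidem : E * E = E := by
    rw [hE, Matrix.sub_mul, Matrix.mul_sub, Matrix.mul_sub, hPP]
    simp only [Matrix.one_mul, Matrix.mul_one]
    abel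
  have hPZ : P * Z = Z := by
    ext i j
    have hcol : Z *ᵥ (Pi.single j 1) ∈ LinearMap.range P.mulVecLin := by
      rw [hPrange]
      exact ⟨Pi.single j 1, rfl⟩
    obtain ⟨y, hy⟩ := hcol
    have hPy : P *ᵥ (Z *ᵥ Pi.single j 1) = Z *ᵥ Pi.single j 1 := by
      rw [← hy]
      simp only [Matrix.mulVecLin_apply]
      rw [Matrix.mulVec_mulVec, hPP]
    have h2 := congrFun hPy i
    simp only [Matrix.mulVec_single_one] at h2
    simpa [Matrix.mul_apply, Matrix.mulVec, dotProduct] using h2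
  have hEZ : E * Z = 0 := by
    rw [hE, Matrix.sub_mul, Matrix.one_mul, hPZ, sub_self]
  -- invertibility
  have hdet : IsUnit (Ω₁ * Ω₁ᵀ).det := by
    apply rank_isUnit_det'
    rw [Matrix.rank_self_mul_transpose, hrank]
  have hone : Ω₁ * (Ω₁ᵀ * (Ω₁ * Ω₁ᵀ)⁻¹) = 1 := by
    rw [← Matrix.mul_assoc, Matrix.mul_nonsing_inv _ hdet]
  -- index embeddings
  set emb : Fin k → Fin n := fun j => ⟨j.1, by omega⟩ with hembdef
  have hembk : ∀ j : Fin k, (emb j).1 < k := fun j => j.2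
  have htailk : ∀ r : Fin (n-k), k ≤ (tailIdx hkn r).1 := fun r => Nat.le_add_right k r.1
  -- positivity of head eigenvalues
  have hlampos : ∀ j : Fin k, 0 < lam (emb j) := by
    intro j
    apply lt_of_lt_of_le hlamk
    apply hlam
    rw [Fin.le_def]
    simp only [hembdef]
    omega
  -- U-coordinate matrices
  set Φ : Matrix (Fin n) (Fin (k+p)) ℝ := Uᵀ * Ω with hΦ
  set X₀ : Matrix (Fin (k+p)) (Fin k) ℝ := Ω₁ᵀ * (Ω₁ * Ω₁ᵀ)⁻¹ with hX₀
  set B : Matrix (Fin (n-k)) (Fin k) ℝ := Ω₂ * X₀ with hB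
  set C : Matrix (Fin k) (Fin n) ℝ :=
    Matrix.of (fun j i => if i = emb j then lam i ^ ((3:ℝ)/4 - (q:ℝ)) else 0) with hC
  set N : Matrix (Fin n) (Fin n) ℝ :=
    Matrix.diagonal (fun i => lam i ^ ((1:ℝ)/4)) -
      Matrix.diagonal (fun i => lam i ^ ((q:ℝ)-1/2)) * Φ * (X₀ * C) with hN
  set K : Matrix (Fin n) (Fin n) ℝ := Z * ((X₀ * C) * Uᵀ) with hK
  -- rows of Φ
  have hΦ1 : ∀ (j : Fin k) (l : Fin (k+p)), Φ (emb j) l = Ω₁ j l := by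
    intro j l
    rw [hΩ₁, hΦ]
    simp [Matrix.mul_apply, hembdef]
  have hΦ2 : ∀ (r : Fin (n-k)) (l : Fin (k+p)), Φ (tailIdx hkn r) l = Ω₂ r l := by
    intro r l
    rw [hΩ₂, hΦ]
    simp [Matrix.mul_apply]
  have hΦX₁ : ∀ (j j' : Fin k), (Φ * X₀) (emb j) j' = if j = j' then 1 else 0 := by
    intro j j'
    have h1 : (Φ * X₀) (emb j) j' = (Ω₁ * X₀) j j' := by
      rw [Matrix.mul_apply, Matrix.mul_apply]
      exact Finset.sum_congr rfl fun l _ => by rw [hΦ1]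
    rw [h1, hX₀, hone, Matrix.one_apply]
  have hΦX₂ : ∀ (r : Fin (n-k)) (j' : Fin k), (Φ * X₀) (tailIdx hkn r) j' = B r j' := by
    intro r j'
    rw [hB, Matrix.mul_apply, Matrix.mul_apply]
    exact Finset.sum_congr rfl fun l _ => by rw [hΦ2]
  -- entries of (Φ * X₀) * C
  have hcolC : ∀ (i i' : Fin n), ((Φ * X₀) * C) i i' =
      if h : i'.1 < k then (Φ * X₀) i ⟨i'.1, h⟩ * lam i' ^ ((3:ℝ)/4 - (q:ℝ)) else 0 := by
    intro i i'
    rw [Matrix.mul_apply]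
    by_cases h : i'.1 < k
    · rw [dif_pos h]
      rw [Finset.sum_eq_single ⟨i'.1, h⟩]
      · have : i' = emb ⟨i'.1, h⟩ := by
          apply Fin.ext
          simp [hembdef]
        rw [hC]
        simp [← this]
      · intro j _ hj
        have hne : ¬ (i' = emb j) := by
          intro hcontra
          apply hj
          have hv : i'.1 = j.1 := by rw [hcontra]
          apply Fin.ext
          simp only []
          omega
        rw [hC]
        simp [hne]
      · intro hmem
        exact absurd (Finset.mem_univ _) hmem
    · rw [dif_neg h]
      apply Finset.sum_eq_zero
      intro j _
      have hne : ¬ (i' = emb j) := by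
        intro hcontra
        exact h (by rw [hcontra]; exact j.2)
      rw [hC]
      simp [hne]
  -- entries of N
  have hNentry : ∀ (i i' : Fin n), N i i' =
      (if i = i' then lam i ^ ((1:ℝ)/4) else 0) -
      lam i ^ ((q:ℝ)-1/2) * ((Φ * X₀) * C) i i' := by
    intro i i'
    have h2 : Matrix.diagonal (fun i => lam i ^ ((q:ℝ)-1/2)) * Φ * (X₀ * C)
        = Matrix.diagonal (fun i => lam i ^ ((q:ℝ)-1/2)) * ((Φ * X₀) * C) := by
      rw [Matrix.mul_assoc, ← Matrix.mul_assoc Φ X₀ C]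
    rw [hN]
    simp only [Matrix.sub_apply, h2, Matrix.diagonal_mul, Matrix.diagonal_apply]
  have hNrow1 : ∀ (j : Fin k) (i' : Fin n), N (emb j) i' = 0 := by
    intro j i'
    rw [hNentry, hcolC]
    by_cases h : i'.1 < k
    · rw [dif_pos h, hΦX₁]
      by_cases he : emb j = i'
      · have hji : j = ⟨i'.1, h⟩ := by
          apply Fin.ext
          have := congrArg Fin.val he
          simpa [hembdef] using this
        rw [if_pos he, if_pos hji]
        have hpos : 0 < lam (emb j) := hlampos j
        have hlameq : lam i' = lam (emb j) := by rw [he]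
        rw [hlameq, one_mul, ← Real.rpow_add hpos]
        norm_num
      · have hji : ¬ (j = ⟨i'.1, h⟩) := by
          intro hcontra
          apply he
          apply Fin.ext
          have := congrArg Fin.val hcontra
          simp [hembdef] at this ⊢
          omega
        rw [if_neg he, if_neg hji]
        ring
    · rw [dif_neg h]
      have he : ¬ (emb j = i') := by
        intro hcontra
        apply h
        have := congrArg Fin.val hcontra
        simp [hembdef] at this
        omega
      rw [if_neg he]
      ring
  have hNrow2a : ∀ (r : Fin (n-k)) (j' : Fin k), N (tailIdx hkn r) (emb j') =
      -(lam (tailIdx hkn r) ^ ((q:ℝ)-1/2) * B r j' * lam (emb j') ^ ((3:ℝ)/4 - (q:ℝ))) := by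
    intro r j'
    rw [hNentry, hcolC]
    have h : (emb j').1 < k := hembk j'
    rw [dif_pos h]
    have hij : (⟨(emb j').1, h⟩ : Fin k) = j' := by
      apply Fin.ext
      simp [hembdef]
    rw [hij, hΦX₂]
    have hne : ¬ (tailIdx hkn r = emb j') := by
      intro hcontra
      have := congrArg Fin.val hcontra
      simp [hembdef, tailIdx] at this
      omega
    rw [if_neg hne]
    ring
  have hNrow2b : ∀ (r r' : Fin (n-k)), N (tailIdx hkn r) (tailIdx hkn r') =
      if r = r' then lam (tailIdx hkn r) ^ ((1:ℝ)/4) else 0 := by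
    intro r r'
    rw [hNentry, hcolC]
    have h : ¬ ((tailIdx hkn r').1 < k) := by
      simp [tailIdx]
    rw [dif_neg h, mul_zero, sub_zero]
    by_cases he : r = r'
    · rw [if_pos (by rw [he]), if_pos he]
    · have : ¬ (tailIdx hkn r = tailIdx hkn r') := by
        intro hcontra
        apply he
        have := congrArg Fin.val hcontra
        simp [tailIdx] at this
        exact Fin.ext this
      rw [if_neg this, if_neg he]
  -- step 1: trace comparison
  have step1 : T.trace - Shat.trace ≤ (E * T).trace := by
    have h := traceP_le_trace' P T Shat hPsym hPP hTsym hShat (by rw [hShatsq, hAhat])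
    have h2 : (E * T).trace = T.trace - (P * T).trace := by
      rw [hE, Matrix.sub_mul, Matrix.one_mul, Matrix.trace_sub]
    linarith
  -- step 2
  have step2 : (E * T).trace = ∑ i, ∑ j, ((E * R) i j)^2 := by
    rw [sum_sq_eq_trace']
    have h1 : (E * R)ᵀ * (E * R) = R * (E * R) := by
      rw [Matrix.transpose_mul, hEsym, hRsym, Matrix.mul_assoc, ← Matrix.mul_assoc E E R, hEidem]
    rw [h1, Matrix.trace_mul_comm R (E * R), Matrix.mul_assoc, hRR]
  -- step 3
  have step3 : E * R = E * (R - K) := by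
    rw [Matrix.mul_sub, hK, ← Matrix.mul_assoc, hEZ, Matrix.zero_mul, sub_zero]
  -- step 4
  have step4 : ∑ i, ∑ j, ((E * (R - K)) i j)^2 ≤ ∑ i, ∑ j, ((R - K) i j)^2 := by
    have hcol : ∀ (i j : Fin n), (E * (R - K)) i j = (E *ᵥ (fun l => (R - K) l j)) i := by
      intro i j
      simp [Matrix.mul_apply, Matrix.mulVec, dotProduct]
    calc ∑ i, ∑ j, ((E * (R - K)) i j)^2
        = ∑ j, ∑ i, ((E *ᵥ (fun l => (R - K) l j)) i)^2 := by
          rw [Finset.sum_comm]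
          exact Finset.sum_congr rfl fun j _ => Finset.sum_congr rfl fun i _ => by rw [hcol]
      _ ≤ ∑ j, ∑ i, ((R - K) i j)^2 :=
          Finset.sum_le_sum fun j _ => proj_contract' E hEsym hEidem _
      _ = ∑ i, ∑ j, ((R - K) i j)^2 := Finset.sum_comm
  -- step 5
  have step5 : R - K = U * N * Uᵀ := by
    have hRpart : R = U * Matrix.diagonal (fun i => lam i ^ ((1:ℝ)/4)) * Uᵀ := hR.trans rfl
    have hKpart : K = U * (Matrix.diagonal (fun i => lam i ^ ((q:ℝ)-1/2)) * Φ * (X₀ * C)) * Uᵀ := by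
      rw [hK, hZ, hΦ]
      simp only [apow, Matrix.mul_assoc]
    rw [hN, Matrix.mul_sub, Matrix.sub_mul, ← hRpart, ← hKpart]
  -- step 6
  have step6 : ∑ i, ∑ j, ((U * N * Uᵀ) i j)^2 = ∑ i, ∑ j, (N i j)^2 := by
    rw [sum_sq_eq_trace', sum_sq_eq_trace']
    have h1 : (U * N * Uᵀ)ᵀ * (U * N * Uᵀ) = U * (Nᵀ * N) * Uᵀ := by
      rw [Matrix.transpose_mul, Matrix.transpose_mul, Matrix.transpose_transpose]
      simp only [Matrix.mul_assoc, hUU]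
    rw [h1, Matrix.trace_mul_cycle, ← Matrix.mul_assoc, hU', Matrix.one_mul]
  -- splitting of sums over Fin n
  have h' : k + (n - k) = n := by omega
  have hsplit : ∀ f : Fin n → ℝ,
      ∑ i, f i = (∑ j : Fin k, f (emb j)) + ∑ r : Fin (n-k), f (tailIdx hkn r) := by
    intro f
    rw [← Equiv.sum_comp (finSumFinEquiv.trans (finCongr h')) f, Fintype.sum_sum_type]
    rfl
  -- monotonicity facts
  have hmono1 : ∀ r : Fin (n-k), lam (tailIdx hkn r) ≤ lam ⟨k, hkn⟩ := by
    intro r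
    apply hlam
    rw [Fin.le_def]
    simp [tailIdx]
  have hmono2 : ∀ j' : Fin k, lam ⟨k - 1, by omega⟩ ≤ lam (emb j') := by
    intro j'
    apply hlam
    rw [Fin.le_def]
    have := j'.2
    simp [hembdef]
    omega
  -- bound on ∑∑ N²
  have hNbound : ∑ i, ∑ i', (N i i')^2 ≤
      (∑ r : Fin (n-k), Real.sqrt (lam (tailIdx hkn r))) +
      (lam ⟨k, hkn⟩ / lam ⟨k - 1, by omega⟩) ^ (2 * (q:ℝ) - 3/2) *
        ∑ r : Fin (n-k), ∑ j' : Fin k, (lam (tailIdx hkn r) ^ ((1:ℝ)/4) * B r j')^2 := by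
    rw [hsplit (fun i => ∑ i', (N i i')^2)]
    have hzero : (∑ j : Fin k, ∑ i', (N (emb j) i')^2) = 0 := by
      apply Finset.sum_eq_zero
      intro j _
      apply Finset.sum_eq_zero
      intro i' _
      rw [hNrow1]
      ring
    rw [hzero, zero_add]
    have hrow : ∀ r : Fin (n-k), ∑ i', (N (tailIdx hkn r) i')^2 ≤
        Real.sqrt (lam (tailIdx hkn r)) +
        (lam ⟨k, hkn⟩ / lam ⟨k - 1, by omega⟩) ^ (2 * (q:ℝ) - 3/2) *
          ∑ j' : Fin k, (lam (tailIdx hkn r) ^ ((1:ℝ)/4) * B r j')^2 := by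
      intro r
      rw [hsplit (fun i' => (N (tailIdx hkn r) i')^2)]
      have hpart1 : ∑ j' : Fin k, (N (tailIdx hkn r) (emb j'))^2 ≤
          (lam ⟨k, hkn⟩ / lam ⟨k - 1, by omega⟩) ^ (2 * (q:ℝ) - 3/2) *
            ∑ j' : Fin k, (lam (tailIdx hkn r) ^ ((1:ℝ)/4) * B r j')^2 := by
        rw [Finset.mul_sum]
        apply Finset.sum_le_sum
        intro j' _
        rw [hNrow2a, neg_sq]
        exact key_entry' (q:ℝ) hqR (lam (tailIdx hkn r)) (lam (emb j'))
          (lam ⟨k, hkn⟩) (lam ⟨k - 1, by omega⟩) (B r j') (hlam0 _) hlamk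
          (hmono1 r) (hmono2 j')
      have hpart2 : ∑ r' : Fin (n-k), (N (tailIdx hkn r) (tailIdx hkn r'))^2 =
          Real.sqrt (lam (tailIdx hkn r)) := by
        have hterm : ∀ r' : Fin (n-k), (N (tailIdx hkn r) (tailIdx hkn r'))^2 =
            if r = r' then Real.sqrt (lam (tailIdx hkn r)) else 0 := by
          intro r'
          rw [hNrow2b]
          by_cases he : r = r'
          · rw [if_pos he, if_pos he, sq, ← Real.rpow_add' (hlam0 _) (by norm_num),
              Real.sqrt_eq_rpow]
            norm_num
          · rw [if_neg he, if_neg he]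
            ring
        rw [Finset.sum_congr rfl (fun r' _ => hterm r')]
        simp
      rw [hpart2]
      linarith [hpart1]
    calc ∑ r : Fin (n-k), ∑ i', (N (tailIdx hkn r) i')^2
        ≤ ∑ r : Fin (n-k), (Real.sqrt (lam (tailIdx hkn r)) +
            (lam ⟨k, hkn⟩ / lam ⟨k - 1, by omega⟩) ^ (2 * (q:ℝ) - 3/2) *
              ∑ j' : Fin k, (lam (tailIdx hkn r) ^ ((1:ℝ)/4) * B r j')^2) :=
          Finset.sum_le_sum fun r _ => hrow r
      _ = (∑ r : Fin (n-k), Real.sqrt (lam (tailIdx hkn r))) +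
          (lam ⟨k, hkn⟩ / lam ⟨k - 1, by omega⟩) ^ (2 * (q:ℝ) - 3/2) *
            ∑ r : Fin (n-k), ∑ j' : Fin k, (lam (tailIdx hkn r) ^ ((1:ℝ)/4) * B r j')^2 := by
          rw [Finset.sum_add_distrib, Finset.mul_sum]
  -- Frobenius norm identification
  have hfrob : frob (Matrix.diagonal (fun i : Fin (n-k) => lam (tailIdx hkn i) ^ ((1:ℝ)/4)) *
      Ω₂ * X₀) ^ 2 = ∑ r : Fin (n-k), ∑ j' : Fin k,
        (lam (tailIdx hkn r) ^ ((1:ℝ)/4) * B r j')^2 := by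
    rw [frob, Real.sq_sqrt (by positivity)]
    apply Finset.sum_congr rfl
    intro r _
    apply Finset.sum_congr rfl
    intro j' _
    congr 1
    rw [Matrix.mul_assoc, Matrix.diagonal_mul, hB]
  calc T.trace - Shat.trace ≤ (E * T).trace := step1
    _ = ∑ i, ∑ j, ((E * R) i j)^2 := step2
    _ = ∑ i, ∑ j, ((E * (R - K)) i j)^2 := by rw [← step3]
    _ ≤ ∑ i, ∑ j, ((R - K) i j)^2 := step4
    _ = ∑ i, ∑ j, (N i j)^2 := by rw [step5, step6]
    _ ≤ (∑ r : Fin (n-k), Real.sqrt (lam (tailIdx hkn r))) +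
        (lam ⟨k, hkn⟩ / lam ⟨k - 1, by omega⟩) ^ (2 * (q:ℝ) - 3/2) *
          ∑ r : Fin (n-k), ∑ j' : Fin k, (lam (tailIdx hkn r) ^ ((1:ℝ)/4) * B r j')^2 := hNbound
    _ = (∑ i : Fin (n - k), Real.sqrt (lam (tailIdx hkn i))) +
        (lam ⟨k, hkn⟩ / lam ⟨k - 1, by omega⟩) ^ (2 * (q : ℝ) - 3/2) *
          frob ((Matrix.diagonal (fun i : Fin (n - k) => lam (tailIdx hkn i) ^ ((1 : ℝ)/4))) *
            Ω₂ * X₀) ^ 2 := by rw [hfrob]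



end FunNystrom
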